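/- Let χ : ℝⁿ → ℝ be measurable, integrable on ℝⁿ, with m_0(χ) < ∞. Let 1 ≤ p < ∞ and f ∈ L^p(ℝⁿ). Then for every w > 0 the function S_w f is well-defined almost everywhere, belongs to L^p(ℝⁿ), and ‖S_w f‖_p ≤ m_0(χ)^{(p−1)/p} · ‖χ‖_1^{1/p} · ‖f‖_p. -/

import Mathlib

/-!
With `a_k = wⁿ ∫_{R_k^w} f`, Hölder's inequality on each cell (of volume `w⁻ⁿ`) gives
`|a_k|^p ≤ wⁿ ∫_{R_k^w} |f|^p`, and since the cells tile `ℝⁿ` up to null sets,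
`∑ |a_k|^p ≤ wⁿ ‖f‖_p^p`. Jensen's inequality for the weights `|χ(wx - k)|`, whose sum is at most
`m₀(χ)`, gives `(∑ |χ(wx - k)| |a_k|)^p ≤ m₀(χ)^{p-1} ∑ |χ(wx - k)| |a_k|^p`, and each
`x ↦ |χ(wx - k)|` has integral `w⁻ⁿ ‖χ‖₁`. Hence the majorant `∑ |χ(wx - k)| |a_k|` of `|S_w f|`
has `p`-th power integral at most `m₀(χ)^{p-1} ‖χ‖₁ ‖f‖_p^p`; in particular it is finite almost
everywhere, and there the series defining `S_w f` converges absolutely.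
-/

open MeasureTheory Filter

noncomputable def latticePt (n : ℕ) (k : Fin n → ℤ) : EuclideanSpace ℝ (Fin n) :=
  WithLp.toLp 2 (fun i => (k i : ℝ))

/-- Discrete absolute moment of order `β`. -/
noncomputable def mom (n : ℕ) (χ : EuclideanSpace ℝ (Fin n) → ℝ) (β : ℝ) : ENNReal :=
  ⨆ u : EuclideanSpace ℝ (Fin n), ∑' k : Fin n → ℤ,
    ENNReal.ofReal (|χ (u - latticePt n k)| * ‖u - latticePt n k‖ ^ β)

/-- The cell `R_k^w`. -/
def cell (n : ℕ) (w : ℝ) (k : Fin n → ℤ) : Set (EuclideanSpace ℝ (Fin n)) :=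
  {u | ∀ i, u i ∈ Set.Icc ((k i : ℝ) / w) (((k i : ℝ) + 1) / w)}

/-- Sampling Kantorovich operator. -/
noncomputable def SK (n : ℕ) (χ f : EuclideanSpace ℝ (Fin n) → ℝ) (w : ℝ)
    (x : EuclideanSpace ℝ (Fin n)) : ℝ :=
  ∑' k : Fin n → ℤ, χ (w • x - latticePt n k) * (w ^ n * ∫ u in cell n w k, f u)

open Set
open scoped ENNReal

lemma ENNReal.tsum_mul_rpow_le {ι : Type*} (c b : ι → ℝ≥0∞) {p : ℝ} (hp : 1 ≤ p) :
    (∑' i, c i * b i) ^ p ≤ (∑' i, c i) ^ (p - 1) * ∑' i, c i * b i ^ p := by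
  have hp0 : 0 < p := zero_lt_one.trans_le hp
  have holder : ∑' i, c i * b i ≤ (∑' i, c i) ^ (1 - p⁻¹) * (∑' i, c i * b i ^ p) ^ p⁻¹ := by
    rw [ENNReal.tsum_eq_iSup_sum]
    refine iSup_le fun s => (ENNReal.inner_le_weight_mul_Lp_of_nonneg s hp c b).trans ?_
    gcongr
    · exact sub_nonneg.2 (inv_le_one_of_one_le₀ hp)
    · exact ENNReal.sum_le_tsum s
    · exact ENNReal.sum_le_tsum s
  calc (∑' i, c i * b i) ^ p
      ≤ ((∑' i, c i) ^ (1 - p⁻¹) * (∑' i, c i * b i ^ p) ^ p⁻¹) ^ p := by gcongr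
    _ = (∑' i, c i) ^ (p - 1) * ∑' i, c i * b i ^ p := by
      rw [ENNReal.mul_rpow_of_nonneg _ _ hp0.le, ← ENNReal.rpow_mul, ← ENNReal.rpow_mul,
        sub_mul, one_mul, inv_mul_cancel₀ hp0.ne', ENNReal.rpow_one]

lemma enorm_integral_rpow_le {α E : Type*} [MeasurableSpace α] [NormedAddCommGroup E]
    [NormedSpace ℝ E] (μ : Measure α) {p : ℝ} (hp : 1 ≤ p) {f : α → E}
    (hf : AEStronglyMeasurable f μ) :
    ‖∫ x, f x ∂μ‖ₑ ^ p ≤ μ univ ^ (p - 1) * ∫⁻ x, ‖f x‖ₑ ^ p ∂μ := by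
  have hp0 : 0 < p := zero_lt_one.trans_le hp
  have hL1 := eLpNorm_le_eLpNorm_mul_rpow_measure_univ (p := 1) (q := ENNReal.ofReal p)
    (ENNReal.one_le_ofReal.2 hp) hf
  rw [eLpNorm_one_eq_lintegral_enorm, eLpNorm_eq_lintegral_rpow_enorm_toReal
    (ENNReal.ofReal_pos.2 hp0).ne' ENNReal.ofReal_ne_top, ENNReal.toReal_ofReal hp0.le] at hL1
  calc ‖∫ x, f x ∂μ‖ₑ ^ p ≤ (∫⁻ x, ‖f x‖ₑ ∂μ) ^ p := by
        gcongr; exact enorm_integral_le_lintegral_enorm f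
    _ ≤ ((∫⁻ x, ‖f x‖ₑ ^ p ∂μ) ^ (1 / p) * μ univ ^ (1 / (1 : ℝ≥0∞).toReal - 1 / p)) ^ p := by
        gcongr
    _ = μ univ ^ (p - 1) * ∫⁻ x, ‖f x‖ₑ ^ p ∂μ := by
        rw [ENNReal.mul_rpow_of_nonneg _ _ hp0.le, ← ENNReal.rpow_mul, ← ENNReal.rpow_mul,
          ENNReal.toReal_one, one_div_mul_cancel hp0.ne', ENNReal.rpow_one, sub_mul,
          one_div_mul_cancel hp0.ne', div_one, one_mul, mul_comm]

lemma eLpNorm_ofReal_eq_lintegral {α ε : Type*} [MeasurableSpace α] [ENorm ε] {μ : Measure α}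
    {p : ℝ} (hp : 0 < p) (f : α → ε) :
    eLpNorm f (ENNReal.ofReal p) μ = (∫⁻ x, ‖f x‖ₑ ^ p ∂μ) ^ (1 / p) := by
  rw [eLpNorm_eq_lintegral_rpow_enorm_toReal (ENNReal.ofReal_pos.2 hp).ne' ENNReal.ofReal_ne_top,
    ENNReal.toReal_ofReal hp.le]

lemma ae_lt_top_of_eLpNorm_ofReal_lt_top {α : Type*} [MeasurableSpace α] {μ : Measure α}
    {p : ℝ} (hp : 0 < p) {g : α → ℝ≥0∞} (hg : AEMeasurable g μ)
    (h : eLpNorm g (ENNReal.ofReal p) μ < ∞) : ∀ᵐ x ∂μ, g x < ∞ := by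
  rw [eLpNorm_ofReal_eq_lintegral hp, ENNReal.rpow_lt_top_iff_of_pos (one_div_pos.2 hp)] at h
  have hint : ∫⁻ x, g x ^ p ∂μ < ∞ := by simpa only [enorm_eq_self] using h
  filter_upwards [ae_lt_top' (hg.pow_const p) hint.ne] with x hx
  exact (ENNReal.rpow_lt_top_iff_of_pos hp).1 hx

lemma lintegral_comp_smul_sub {E : Type*} [NormedAddCommGroup E] [NormedSpace ℝ E]
    [MeasurableSpace E] [BorelSpace E] [FiniteDimensional ℝ E] (μ : Measure E)
    [μ.IsAddHaarMeasure] {g : E → ℝ≥0∞} (hg : Measurable g) {w : ℝ} (hw : w ≠ 0) (c : E) :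
    ∫⁻ x, g (w • x - c) ∂μ = ENNReal.ofReal |(w ^ Module.finrank ℝ E)⁻¹| * ∫⁻ x, g x ∂μ := by
  rw [← lintegral_sub_right_eq_self g c, ← smul_eq_mul, ← lintegral_smul_measure,
    ← Measure.map_addHaar_smul μ hw, lintegral_map (by fun_prop) (by fun_prop)]

lemma lintegral_eq_tsum_preimage_singleton {α ι : Type*} [MeasurableSpace α] [Countable ι]
    [MeasurableSpace ι] [MeasurableSingletonClass ι] {μ : Measure α} {φ : α → ι}
    (hφ : Measurable φ) (g : α → ℝ≥0∞) :
    ∫⁻ x, g x ∂μ = ∑' k, ∫⁻ x in φ ⁻¹' {k}, g x ∂μ := by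
  rw [← lintegral_iUnion (fun k => hφ (measurableSet_singleton k)) (pairwise_disjoint_fiber φ),
    ← preimage_iUnion, iUnion_of_singleton, preimage_univ, Measure.restrict_univ]

section Cells

variable {n : ℕ}

lemma cell_eq_preimage_Icc (w : ℝ) (k : Fin n → ℤ) :
    cell n w k = (MeasurableEquiv.toLp 2 (Fin n → ℝ)).symm ⁻¹'
      Icc (fun i => (k i : ℝ) / w) (fun i => ((k i : ℝ) + 1) / w) := by
  ext x
  simp [cell, Pi.le_def, forall_and]

lemma volume_cell {w : ℝ} (hw : 0 < w) (k : Fin n → ℤ) :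
    volume (cell n w k) = (ENNReal.ofReal w ^ n)⁻¹ := by
  rw [cell_eq_preimage_Icc, (EuclideanSpace.volume_preserving_symm_measurableEquiv_toLp
    (Fin n)).measure_preimage measurableSet_Icc.nullMeasurableSet, Real.volume_Icc_pi]
  have hside : ∀ i, ((k i : ℝ) + 1) / w - (k i : ℝ) / w = w⁻¹ := fun i => by
    field_simp; ring
  simp [hside, ENNReal.ofReal_inv_of_pos hw, ENNReal.inv_pow]

noncomputable def cellIndex (w : ℝ) (x : EuclideanSpace ℝ (Fin n)) : Fin n → ℤ :=
  fun i => ⌊w * x i⌋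

lemma measurable_cellIndex (w : ℝ) : Measurable (cellIndex (n := n) w) :=
  measurable_pi_lambda _ fun i => Int.measurable_floor.comp
    (measurable_const.mul ((measurable_pi_apply i).comp
      (MeasurableEquiv.toLp 2 (Fin n → ℝ)).symm.measurable))

lemma cellIndex_preimage_singleton {w : ℝ} (hw : 0 < w) (k : Fin n → ℤ) :
    cellIndex w ⁻¹' {k} = (MeasurableEquiv.toLp 2 (Fin n → ℝ)).symm ⁻¹'
      univ.pi (fun i => Ico ((k i : ℝ) / w) (((k i : ℝ) + 1) / w)) := by
  ext x
  simp only [mem_preimage, mem_singleton_iff, mem_univ_pi, funext_iff, cellIndex, mem_Ico,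
    Int.floor_eq_iff, div_le_iff₀ hw, lt_div_iff₀ hw, mul_comm w]
  rfl

lemma cell_ae_eq_cellIndex_preimage {w : ℝ} (hw : 0 < w) (k : Fin n → ℤ) :
    cell n w k =ᵐ[volume] cellIndex w ⁻¹' {k} := by
  rw [cell_eq_preimage_Icc, cellIndex_preimage_singleton hw]
  exact (EuclideanSpace.volume_preserving_symm_measurableEquiv_toLp
    (Fin n)).quasiMeasurePreserving.preimage_ae_eq Measure.univ_pi_Ico_ae_eq_Icc.symm

lemma tsum_setLIntegral_cell {w : ℝ} (hw : 0 < w) (g : EuclideanSpace ℝ (Fin n) → ℝ≥0∞) :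
    ∑' k, ∫⁻ x in cell n w k, g x = ∫⁻ x, g x := by
  rw [lintegral_eq_tsum_preimage_singleton (measurable_cellIndex w)]
  exact tsum_congr fun k => setLIntegral_congr (cell_ae_eq_cellIndex_preimage hw k)

end Cells

section Kantorovich

variable {n : ℕ}

lemma enorm_cellAverage_rpow_le {w : ℝ} (hw : 0 < w) {p : ℝ} (hp : 1 ≤ p)
    {f : EuclideanSpace ℝ (Fin n) → ℝ} (hf : AEStronglyMeasurable f) (k : Fin n → ℤ) :
    ‖w ^ n * ∫ u in cell n w k, f u‖ₑ ^ p ≤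
      ENNReal.ofReal w ^ n * ∫⁻ u in cell n w k, ‖f u‖ₑ ^ p := by
  have hp0 : 0 < p := zero_lt_one.trans_le hp
  set W := ENNReal.ofReal w ^ n
  have hW0 : W ≠ 0 := pow_ne_zero _ (ENNReal.ofReal_pos.2 hw).ne'
  have hWtop : W ≠ ∞ := ENNReal.pow_ne_top ENNReal.ofReal_ne_top
  have hJensen := enorm_integral_rpow_le (volume.restrict (cell n w k)) hp hf.restrict
  rw [Measure.restrict_apply_univ, volume_cell hw] at hJensen
  calc ‖w ^ n * ∫ u in cell n w k, f u‖ₑ ^ p = W ^ p * ‖∫ u in cell n w k, f u‖ₑ ^ p := by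
        rw [enorm_mul, Real.enorm_eq_ofReal (by positivity), ENNReal.ofReal_pow hw.le,
          ENNReal.mul_rpow_of_nonneg _ _ hp0.le]
    _ ≤ W ^ p * (W⁻¹ ^ (p - 1) * ∫⁻ u in cell n w k, ‖f u‖ₑ ^ p) := by gcongr
    _ = W * ∫⁻ u in cell n w k, ‖f u‖ₑ ^ p := by
        rw [← mul_assoc, ENNReal.inv_rpow, ← ENNReal.rpow_neg, ← ENNReal.rpow_add _ _ hW0 hWtop,
          show p + -(p - 1) = 1 by ring, ENNReal.rpow_one]

lemma tsum_enorm_cellAverage_rpow_le {w : ℝ} (hw : 0 < w) {p : ℝ} (hp : 1 ≤ p)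
    {f : EuclideanSpace ℝ (Fin n) → ℝ} (hf : AEStronglyMeasurable f) :
    ∑' k, ‖w ^ n * ∫ u in cell n w k, f u‖ₑ ^ p ≤ ENNReal.ofReal w ^ n * ∫⁻ u, ‖f u‖ₑ ^ p := by
  calc ∑' k, ‖w ^ n * ∫ u in cell n w k, f u‖ₑ ^ p
      ≤ ∑' k, ENNReal.ofReal w ^ n * ∫⁻ u in cell n w k, ‖f u‖ₑ ^ p :=
        ENNReal.tsum_le_tsum fun k => enorm_cellAverage_rpow_le hw hp hf k
    _ = ENNReal.ofReal w ^ n * ∫⁻ u, ‖f u‖ₑ ^ p := by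
        rw [ENNReal.tsum_mul_left, tsum_setLIntegral_cell hw]

lemma tsum_enorm_le_mom (χ : EuclideanSpace ℝ (Fin n) → ℝ) (u : EuclideanSpace ℝ (Fin n)) :
    ∑' k, ‖χ (u - latticePt n k)‖ₑ ≤ mom n χ 0 :=
  le_of_eq_of_le (by simp [Real.enorm_eq_ofReal_abs]) (le_iSup _ u)

lemma lintegral_enorm_comp_smul_sub {χ : EuclideanSpace ℝ (Fin n) → ℝ} (hχ : Measurable χ)
    {w : ℝ} (hw : 0 < w) (c : EuclideanSpace ℝ (Fin n)) :
    ∫⁻ x, ‖χ (w • x - c)‖ₑ = (ENNReal.ofReal w ^ n)⁻¹ * eLpNorm χ 1 volume := by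
  rw [lintegral_comp_smul_sub volume hχ.enorm hw.ne', eLpNorm_one_eq_lintegral_enorm,
    finrank_euclideanSpace_fin, abs_of_pos (by positivity),
    ENNReal.ofReal_inv_of_pos (by positivity), ENNReal.ofReal_pow hw.le]

lemma lintegral_tsum_sampling_rpow_le {χ : EuclideanSpace ℝ (Fin n) → ℝ} (hχ : Measurable χ)
    {w : ℝ} (hw : 0 < w) {p : ℝ} (hp : 1 ≤ p) (a : (Fin n → ℤ) → ℝ≥0∞) :
    ∫⁻ x, (∑' k, ‖χ (w • x - latticePt n k)‖ₑ * a k) ^ p ≤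
      mom n χ 0 ^ (p - 1) * ((ENNReal.ofReal w ^ n)⁻¹ * eLpNorm χ 1 volume * ∑' k, a k ^ p) := by
  have hmeas (k : Fin n → ℤ) : Measurable fun x => ‖χ (w • x - latticePt n k)‖ₑ := by fun_prop
  calc ∫⁻ x, (∑' k, ‖χ (w • x - latticePt n k)‖ₑ * a k) ^ p
      ≤ ∫⁻ x, mom n χ 0 ^ (p - 1) * ∑' k, ‖χ (w • x - latticePt n k)‖ₑ * a k ^ p := by
        refine lintegral_mono fun x => (ENNReal.tsum_mul_rpow_le _ _ hp).trans ?_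
        gcongr
        exact tsum_enorm_le_mom χ (w • x)
    _ = mom n χ 0 ^ (p - 1) * ∑' k, (∫⁻ x, ‖χ (w • x - latticePt n k)‖ₑ) * a k ^ p := by
        rw [lintegral_const_mul _ (Measurable.tsum fun k => (hmeas k).mul_const _),
          lintegral_tsum fun k => ((hmeas k).mul_const _).aemeasurable]
        simp_rw [lintegral_mul_const _ (hmeas _)]
    _ = _ := by
        simp_rw [lintegral_enorm_comp_smul_sub hχ hw, ENNReal.tsum_mul_left]

noncomputable def SKMajorant (n : ℕ) (χ f : EuclideanSpace ℝ (Fin n) → ℝ) (w : ℝ)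
    (x : EuclideanSpace ℝ (Fin n)) : ℝ≥0∞ :=
  ∑' k : Fin n → ℤ, ‖χ (w • x - latticePt n k)‖ₑ * ‖w ^ n * ∫ u in cell n w k, f u‖ₑ

lemma measurable_SK {χ : EuclideanSpace ℝ (Fin n) → ℝ} (hχ : Measurable χ)
    (f : EuclideanSpace ℝ (Fin n) → ℝ) (w : ℝ) : Measurable (SK n χ f w) :=
  Measurable.tsum fun _ => (hχ.comp (by fun_prop)).mul_const _

lemma measurable_SKMajorant {χ : EuclideanSpace ℝ (Fin n) → ℝ} (hχ : Measurable χ)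
    (f : EuclideanSpace ℝ (Fin n) → ℝ) (w : ℝ) : Measurable (SKMajorant n χ f w) :=
  Measurable.tsum fun _ => (hχ.comp (by fun_prop)).enorm.mul_const _

lemma enorm_SK_le_SKMajorant (χ f : EuclideanSpace ℝ (Fin n) → ℝ) (w : ℝ)
    (x : EuclideanSpace ℝ (Fin n)) : ‖SK n χ f w x‖ₑ ≤ SKMajorant n χ f w x :=
  enorm_tsum_le_tsum_enorm.trans_eq (tsum_congr fun _ => enorm_mul _ _)

lemma summable_of_SKMajorant_ne_top {χ f : EuclideanSpace ℝ (Fin n) → ℝ} {w : ℝ}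
    {x : EuclideanSpace ℝ (Fin n)} (hx : SKMajorant n χ f w x ≠ ∞) :
    Summable fun k : Fin n → ℤ => χ (w • x - latticePt n k) * (w ^ n * ∫ u in cell n w k, f u) :=
  (tsum_enorm_ne_top_iff_summable_norm.1
    ((tsum_congr fun _ => enorm_mul _ _).trans_ne hx)).of_norm

lemma lintegral_SKMajorant_rpow_le {χ f : EuclideanSpace ℝ (Fin n) → ℝ} (hχ : Measurable χ)
    (hf : AEStronglyMeasurable f) {w : ℝ} (hw : 0 < w) {p : ℝ} (hp : 1 ≤ p) :
    ∫⁻ x, SKMajorant n χ f w x ^ p ≤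
      mom n χ 0 ^ (p - 1) * (eLpNorm χ 1 volume * ∫⁻ u, ‖f u‖ₑ ^ p) := by
  have hW : (ENNReal.ofReal w ^ n)⁻¹ * ENNReal.ofReal w ^ n = 1 :=
    ENNReal.inv_mul_cancel (pow_ne_zero _ (ENNReal.ofReal_pos.2 hw).ne')
      (ENNReal.pow_ne_top ENNReal.ofReal_ne_top)
  refine (lintegral_tsum_sampling_rpow_le hχ hw hp _).trans ?_
  gcongr mom n χ 0 ^ (p - 1) * ?_
  calc (ENNReal.ofReal w ^ n)⁻¹ * eLpNorm χ 1 volume *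
        ∑' k, ‖w ^ n * ∫ u in cell n w k, f u‖ₑ ^ p
      ≤ (ENNReal.ofReal w ^ n)⁻¹ * eLpNorm χ 1 volume *
          (ENNReal.ofReal w ^ n * ∫⁻ u, ‖f u‖ₑ ^ p) := by
        gcongr; exact tsum_enorm_cellAverage_rpow_le hw hp hf
    _ = eLpNorm χ 1 volume * ∫⁻ u, ‖f u‖ₑ ^ p := by
        rw [mul_comm _ (eLpNorm χ 1 volume), mul_assoc, ← mul_assoc _ (ENNReal.ofReal w ^ n), hW,
          one_mul]

lemma eLpNorm_SKMajorant_le {χ f : EuclideanSpace ℝ (Fin n) → ℝ} (hχ : Measurable χ)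
    (hf : AEStronglyMeasurable f) {w : ℝ} (hw : 0 < w) {p : ℝ} (hp : 1 ≤ p) :
    eLpNorm (SKMajorant n χ f w) (ENNReal.ofReal p) volume ≤
      mom n χ 0 ^ ((p - 1) / p) * eLpNorm χ 1 volume ^ (1 / p) *
        eLpNorm f (ENNReal.ofReal p) volume := by
  have hp0 : 0 < p := zero_lt_one.trans_le hp
  rw [eLpNorm_ofReal_eq_lintegral hp0, eLpNorm_ofReal_eq_lintegral hp0]
  calc (∫⁻ x, ‖SKMajorant n χ f w x‖ₑ ^ p) ^ (1 / p)
      ≤ (mom n χ 0 ^ (p - 1) * (eLpNorm χ 1 volume * ∫⁻ u, ‖f u‖ₑ ^ p)) ^ (1 / p) := by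
        gcongr; exact lintegral_SKMajorant_rpow_le hχ hf hw hp
    _ = _ := by
        rw [ENNReal.mul_rpow_of_nonneg _ _ (by positivity),
          ENNReal.mul_rpow_of_nonneg _ _ (by positivity), ← ENNReal.rpow_mul, mul_one_div,
          mul_assoc]

end Kantorovich

theorem stmt4 (n : ℕ) (χ f : EuclideanSpace ℝ (Fin n) → ℝ)
    (hχmeas : Measurable χ)
    (hχ1 : Integrable χ)
    (hχ0 : mom n χ 0 < ⊤)
    (p : ℝ) (hp : 1 ≤ p)
    (hf : MemLp f (ENNReal.ofReal p)) :
    ∀ w > (0:ℝ),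
      (∀ᵐ x : EuclideanSpace ℝ (Fin n),
        Summable fun k : Fin n → ℤ =>
          χ (w • x - latticePt n k) * (w ^ n * ∫ u in cell n w k, f u)) ∧
      MemLp (SK n χ f w) (ENNReal.ofReal p) ∧
      eLpNorm (SK n χ f w) (ENNReal.ofReal p) volume ≤
        (mom n χ 0) ^ ((p - 1) / p) * (eLpNorm χ 1 volume) ^ (1 / p) *
          eLpNorm f (ENNReal.ofReal p) volume := by
  intro w hw
  have hp0 : 0 < p := zero_lt_one.trans_le hp
  have hmajorant := eLpNorm_SKMajorant_le hχmeas hf.1 hw hp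
  have hfinite : mom n χ 0 ^ ((p - 1) / p) * eLpNorm χ 1 volume ^ (1 / p) *
      eLpNorm f (ENNReal.ofReal p) volume < ∞ :=
    ENNReal.mul_lt_top (ENNReal.mul_lt_top
      (ENNReal.rpow_lt_top_of_nonneg (by positivity) hχ0.ne)
      (ENNReal.rpow_lt_top_of_nonneg (by positivity)
        (memLp_one_iff_integrable.2 hχ1).eLpNorm_ne_top))
      hf.eLpNorm_lt_top
  have hbound := (eLpNorm_mono_enorm (enorm_SK_le_SKMajorant χ f w)).trans hmajorant
  refine ⟨?_, ⟨(measurable_SK hχmeas f w).aestronglyMeasurable, hbound.trans_lt hfinite⟩, hbound⟩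
  filter_upwards [ae_lt_top_of_eLpNorm_ofReal_lt_top hp0
    (measurable_SKMajorant hχmeas f w).aemeasurable (hmajorant.trans_lt hfinite)] with x hx
  exact summable_of_SKMajorant_ne_top hx.ne
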